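/- Let f : M_{d_L×d_0}(ℝ) → ℝ be differentiable and suppose min{d_1,...,d_{L-1}} ≥ min{d_0, d_L}. If (Ŵ_1,...,Ŵ_L) is a local minimizer of F(W_1,...,W_L) = f(W_L ··· W_1) over all tuples with W_ℓ ∈ M_{d_ℓ×d_{ℓ-1}}(ℝ), then ∇f(Ŵ_L ··· Ŵ_1) = 0. -/

import Mathlib

open Matrix

/-- Frobenius norm of a real matrix. -/
noncomputable def frob {m n : ℕ} (A : Matrix (Fin m) (Fin n) ℝ) : ℝ :=
  Real.sqrt (∑ i, ∑ j, (A i j)^2)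

/-- `prodUpTo d k W = W (k-1) * ⋯ * W 1 * W 0`, the product of the first `k` layer
matrices: in the paper's 1-indexed notation this is the truncated product
`W_{k,-} = W_k ⋯ W_1`, and `prodUpTo d L W = W_L ⋯ W_1` is the full network product. -/
noncomputable def prodUpTo (d : ℕ → ℕ) : (k : ℕ) →
    ((j : ℕ) → Matrix (Fin (d (j+1))) (Fin (d j)) ℝ) → Matrix (Fin (d k)) (Fin (d 0)) ℝ
  | 0, _ => 1
  | k+1, W => W k * prodUpTo d k W

/-- `G` is the gradient of `f` at `A`:  `f (A+H) = f A + ⟨G, H⟩_fro + o(‖H‖_fro)`,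
where `⟨G, H⟩_fro = Tr (Gᵀ H)` is the Frobenius inner product. -/
def HasGradAt {m n : ℕ} (f : Matrix (Fin m) (Fin n) ℝ → ℝ)
    (A G : Matrix (Fin m) (Fin n) ℝ) : Prop :=
  ∀ ε > (0:ℝ), ∃ δ > (0:ℝ), ∀ H : Matrix (Fin m) (Fin n) ℝ,
    frob H ≤ δ → |f (A + H) - f A - (Gᵀ * H).trace| ≤ ε * frob H


namespace Stmt6Aux

attribute [local instance] Matrix.frobeniusSeminormedAddCommGroup Matrix.frobeniusNormedSpace

lemma frob_eq_norm {m n : ℕ} (A : Matrix (Fin m) (Fin n) ℝ) : frob A = ‖A‖ := by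
  rw [Matrix.frobenius_norm_def, frob, Real.sqrt_eq_rpow]
  congr 1
  refine Finset.sum_congr rfl fun i _ => Finset.sum_congr rfl fun j _ => ?_
  rw [Real.norm_eq_abs, show (2:ℝ) = ((2:ℕ):ℝ) by norm_num, Real.rpow_natCast, sq_abs]

lemma frob_nonneg {m n : ℕ} (A : Matrix (Fin m) (Fin n) ℝ) : 0 ≤ frob A :=
  Real.sqrt_nonneg _

lemma frob_zero {m n : ℕ} : frob (0 : Matrix (Fin m) (Fin n) ℝ) = 0 := by
  rw [frob_eq_norm]; exact norm_zero

lemma frob_add_le {m n : ℕ} (A B : Matrix (Fin m) (Fin n) ℝ) :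
    frob (A + B) ≤ frob A + frob B := by
  rw [frob_eq_norm, frob_eq_norm, frob_eq_norm]; exact norm_add_le _ _

lemma frob_smul {m n : ℕ} (s : ℝ) (A : Matrix (Fin m) (Fin n) ℝ) :
    frob (s • A) = |s| * frob A := by
  rw [frob_eq_norm, frob_eq_norm, norm_smul, Real.norm_eq_abs]

lemma eq_zero_of_trace {a b : ℕ} (A : Matrix (Fin a) (Fin b) ℝ)
    (h : ∀ V : Matrix (Fin a) (Fin b) ℝ, (Aᵀ * V).trace = 0) : A = 0 := by
  have h2 := h A
  have hsum : ∑ j, ∑ i, (A i j)^2 = 0 := by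
    rw [Matrix.trace] at h2
    simpa [Matrix.diag, Matrix.mul_apply, Matrix.transpose_apply, pow_two] using h2
  ext i j
  have hj := (Finset.sum_eq_zero_iff_of_nonneg
    (fun j _ => Finset.sum_nonneg fun i _ => sq_nonneg (A i j))).mp hsum j (Finset.mem_univ _)
  have hi := (Finset.sum_eq_zero_iff_of_nonneg (fun i _ => sq_nonneg (A i j))).mp hj i
    (Finset.mem_univ _)
  simpa using (pow_eq_zero_iff two_ne_zero).mp hi

lemma eq_zero_of_vecMul {p q : ℕ} (B : Matrix (Fin p) (Fin q) ℝ)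
    (h : ∀ v, v ᵥ* B = 0) : B = 0 := by
  ext i j
  have := congrFun (h (Pi.single i 1)) j
  simpa using this

lemma eq_zero_of_mulVec {p q : ℕ} (B : Matrix (Fin p) (Fin q) ℝ)
    (h : ∀ v, B *ᵥ v = 0) : B = 0 := by
  ext i j
  have := congrFun (h (Pi.single j 1)) i
  simpa using this

lemma mul_vecMulVec {p q r : ℕ} (T : Matrix (Fin p) (Fin q) ℝ) (u : Fin q → ℝ) (v : Fin r → ℝ) :
    T * vecMulVec u v = vecMulVec (T *ᵥ u) v := by
  ext i k
  simp [Matrix.mul_apply, Matrix.vecMulVec_apply, Matrix.mulVec, dotProduct,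
    Finset.sum_mul, mul_assoc]

lemma vecMulVec_mul {p q r : ℕ} (u : Fin p → ℝ) (v : Fin q → ℝ) (P : Matrix (Fin q) (Fin r) ℝ) :
    vecMulVec u v * P = vecMulVec u (v ᵥ* P) := by
  ext i k
  simp [Matrix.mul_apply, Matrix.vecMulVec_apply, Matrix.vecMul, dotProduct,
    Finset.mul_sum, mul_assoc]

lemma vecMulVec_transpose {p q : ℕ} (u : Fin p → ℝ) (v : Fin q → ℝ) :
    (vecMulVec u v)ᵀ = vecMulVec v u := by
  ext i j; simp [Matrix.vecMulVec_apply, mul_comm]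

lemma vecMulVec_zero_right {p q : ℕ} (u : Fin p → ℝ) :
    vecMulVec u (0 : Fin q → ℝ) = 0 := by
  ext i j; simp [Matrix.vecMulVec_apply]

lemma inj_surj {p q : ℕ} (B : Matrix (Fin p) (Fin q) ℝ) (hpq : p ≤ q)
    (h : ∀ u, B *ᵥ u = 0 → u = 0) : ∀ g, Bᵀ *ᵥ g = 0 → g = 0 := by
  have hinj : Function.Injective B.mulVecLin := by
    rw [← LinearMap.ker_eq_bot, LinearMap.ker_eq_bot']
    intro u hu
    exact h u hu
  have h1 : q ≤ p := by
    have := LinearMap.finrank_le_finrank_of_injective hinj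
    simpa [Module.finrank_fin_fun] using this
  have hsurj : Function.Surjective B.mulVecLin :=
    (LinearMap.injective_iff_surjective_of_finrank_eq_finrank
      (by simp [Module.finrank_fin_fun, le_antisymm hpq h1])).mp hinj
  intro g hg
  obtain ⟨x, hx⟩ := hsurj g
  have hx' : B *ᵥ x = g := hx
  have hdot : g ⬝ᵥ g = 0 := by
    calc g ⬝ᵥ g = g ⬝ᵥ (B *ᵥ x) := by rw [hx']
    _ = (g ᵥ* B) ⬝ᵥ x := dotProduct_mulVec _ _ _
    _ = (Bᵀ *ᵥ g) ⬝ᵥ x := by rw [Matrix.mulVec_transpose]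
    _ = 0 := by rw [hg]; exact zero_dotProduct x
  exact dotProduct_self_eq_zero.mp hdot

noncomputable def prodFrom (d : ℕ → ℕ) (a : ℕ) : (m : ℕ) →
    ((j : ℕ) → Matrix (Fin (d (j+1))) (Fin (d j)) ℝ) → Matrix (Fin (d (a+m))) (Fin (d a)) ℝ
  | 0, _ => (1 : Matrix (Fin (d a)) (Fin (d a)) ℝ)
  | m+1, W => W (a+m) * prodFrom d a m W

variable {d : ℕ → ℕ}

lemma prodUpTo_update_of_le (W : (j : ℕ) → Matrix (Fin (d (j+1))) (Fin (d j)) ℝ)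
    (j : ℕ) (X : Matrix (Fin (d (j+1))) (Fin (d j)) ℝ) :
    ∀ k, k ≤ j → prodUpTo d k (Function.update W j X) = prodUpTo d k W := by
  intro k
  induction k with
  | zero => intro _; rfl
  | succ k ih =>
    intro hk
    show (Function.update W j X) k * prodUpTo d k (Function.update W j X) = W k * prodUpTo d k W
    rw [Function.update_of_ne (by omega) , ih (by omega)]

lemma prodFrom_update_of_lt (W : (j : ℕ) → Matrix (Fin (d (j+1))) (Fin (d j)) ℝ)
    (a j : ℕ) (X : Matrix (Fin (d (j+1))) (Fin (d j)) ℝ) (hj : j < a) :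
    ∀ m, prodFrom d a m (Function.update W j X) = prodFrom d a m W := by
  intro m
  induction m with
  | zero => rfl
  | succ m ih =>
    show (Function.update W j X) (a+m) * prodFrom d a m (Function.update W j X)
        = W (a+m) * prodFrom d a m W
    rw [Function.update_of_ne (by omega), ih]

lemma prodUpTo_add (W : (j : ℕ) → Matrix (Fin (d (j+1))) (Fin (d j)) ℝ) (ℓ : ℕ) :
    ∀ m, prodUpTo d (ℓ+m) W = prodFrom d ℓ m W * prodUpTo d ℓ W := by
  intro m
  induction m with
  | zero =>
    show prodUpTo d ℓ W = (1 : Matrix (Fin (d ℓ)) (Fin (d ℓ)) ℝ) * prodUpTo d ℓ W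
    rw [Matrix.one_mul]
  | succ m ih =>
    show W (ℓ+m) * prodUpTo d (ℓ+m) W = (W (ℓ+m) * prodFrom d ℓ m W) * prodUpTo d ℓ W
    rw [ih, Matrix.mul_assoc]

lemma prodUpTo_update (W : (j : ℕ) → Matrix (Fin (d (j+1))) (Fin (d j)) ℝ) (ℓ m : ℕ)
    (X : Matrix (Fin (d (ℓ+1))) (Fin (d ℓ)) ℝ) :
    prodUpTo d (ℓ+1+m) (Function.update W ℓ X)
      = prodFrom d (ℓ+1) m W * (X * prodUpTo d ℓ W) := by
  rw [prodUpTo_add _ (ℓ+1) m, prodFrom_update_of_lt _ _ _ _ (Nat.lt_succ_self ℓ)]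
  have h2 : prodUpTo d (ℓ+1) (Function.update W ℓ X) = X * prodUpTo d ℓ W := by
    show (Function.update W ℓ X) ℓ * prodUpTo d ℓ (Function.update W ℓ X) = _
    rw [Function.update_self, prodUpTo_update_of_le _ _ _ _ le_rfl]
  rw [h2]

lemma prodUpTo_peel (W : (j : ℕ) → Matrix (Fin (d (j+1))) (Fin (d j)) ℝ) :
    ∀ n, prodUpTo d (n+1) W
      = prodUpTo (fun j => d (j+1)) n (fun j => W (j+1)) * W 0 := by
  intro n
  induction n with
  | zero =>
    show W 0 * (1 : Matrix (Fin (d 0)) (Fin (d 0)) ℝ) = 1 * W 0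
    rw [Matrix.one_mul, Matrix.mul_one]
  | succ n ih =>
    show W (n+1) * prodUpTo d (n+1) W
        = (W (n+1) * prodUpTo (fun j => d (j+1)) n (fun j => W (j+1))) * W 0
    rw [ih, Matrix.mul_assoc]

lemma shift_update (W : (j : ℕ) → Matrix (Fin (d (j+1))) (Fin (d j)) ℝ) (ℓ : ℕ)
    (X : Matrix (Fin (d (ℓ+2))) (Fin (d (ℓ+1))) ℝ) :
    (fun j => Function.update W (ℓ+1) X (j+1))
      = Function.update (fun j => W (j+1)) ℓ X := by
  funext j
  rcases eq_or_ne j ℓ with rfl | h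
  · exact (Function.update_self (j+1) X W).trans
      (Function.update_self j X (fun j => W (j+1))).symm
  · rw [Function.update_of_ne (show j+1 ≠ ℓ+1 by omega) X W,
      Function.update_of_ne h X (fun j => W (j+1))]

lemma shift_update_zero (W : (j : ℕ) → Matrix (Fin (d (j+1))) (Fin (d j)) ℝ)
    (X : Matrix (Fin (d 1)) (Fin (d 0)) ℝ) :
    (fun j => Function.update W 0 X (j+1)) = (fun j => W (j+1)) := by
  funext j
  exact Function.update_of_ne (Nat.succ_ne_zero j) _ _

def consTup (d : ℕ → ℕ) (W₀ : Matrix (Fin (d 1)) (Fin (d 0)) ℝ)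
    (W' : (j : ℕ) → Matrix (Fin (d (j+2))) (Fin (d (j+1))) ℝ) :
    (j : ℕ) → Matrix (Fin (d (j+1))) (Fin (d j)) ℝ
  | 0 => W₀
  | j+1 => W' j

/-- Fiber first-order-condition lemma, version for `d 0 ≤ d j` (head peeling). -/
theorem lemLA' : ∀ (n : ℕ) (d : ℕ → ℕ), (∀ j, j ≤ n+1 → d 0 ≤ d j) →
    ∀ (A : Matrix (Fin (d (n+1))) (Fin (d 0)) ℝ)
      (Wh : (j : ℕ) → Matrix (Fin (d (j+1))) (Fin (d j)) ℝ) (η : ℝ), 0 < η →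
    (∀ W : (j : ℕ) → Matrix (Fin (d (j+1))) (Fin (d j)) ℝ,
      (∀ j, j < n+1 → frob (W j - Wh j) ≤ η) →
      prodUpTo d (n+1) W = prodUpTo d (n+1) Wh →
      ∀ ℓ, ℓ < n+1 → ∀ V : Matrix (Fin (d (ℓ+1))) (Fin (d ℓ)) ℝ,
        (Aᵀ * (prodUpTo d (n+1) (Function.update W ℓ (W ℓ + V))
          - prodUpTo d (n+1) Wh)).trace = 0) →
    A = 0 := by
  intro n
  induction n with
  | zero =>
    intro d hd A Wh η hη C
    have hb0 : ∀ j, j < 0+1 → frob (Wh j - Wh j) ≤ η := fun j _ => by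
      rw [sub_self, frob_zero]; linarith
    apply eq_zero_of_trace
    intro V
    have h2 := C Wh hb0 rfl 0 (by omega) V
    have eA : prodUpTo d (0+1) (Function.update Wh 0 (Wh 0 + V))
        = (Wh 0 + V) * prodUpTo d 0 Wh := by
      show (Function.update Wh 0 (Wh 0 + V)) 0
          * prodUpTo d 0 (Function.update Wh 0 (Wh 0 + V)) = _
      rw [Function.update_self]
      rfl
    have eB : prodUpTo d (0+1) Wh = Wh 0 * prodUpTo d 0 Wh := rfl
    rw [eA, eB, Matrix.add_mul, add_sub_cancel_left] at h2
    rw [show prodUpTo d 0 Wh = (1 : Matrix (Fin (d 0)) (Fin (d 0)) ℝ) from rfl,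
      Matrix.mul_one] at h2
    exact h2
  | succ n IH =>
    intro d hd A Wh η hη C
    have hη2 : 0 < η/2 := by linarith
    have key : ∀ Wl : Matrix (Fin (d (n+2))) (Fin (d (n+1))) ℝ,
        frob (Wl - Wh (n+1)) ≤ η/2 →
        Wl * prodUpTo d (n+1) Wh = Wh (n+1) * prodUpTo d (n+1) Wh →
        Wlᵀ * A = 0 := by
      intro Wl hb hfib
      apply IH d (fun j hj => hd j (by omega)) (Wlᵀ * A) Wh (η/2) hη2
      intro W' hb' hfib' ℓ hℓ V
      have hWtl : Function.update W' (n+1) Wl ℓ = W' ℓ :=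
        Function.update_of_ne (show ℓ ≠ n+1 by omega) Wl W'
      have hb2 : ∀ j, j < n+2 → frob (Function.update W' (n+1) Wl j - Wh j) ≤ η := by
        intro j hj
        rcases eq_or_ne j (n+1) with rfl | hne
        · rw [Function.update_self]
          linarith
        · rw [Function.update_of_ne hne Wl W']
          exact le_trans (hb' j (by omega)) (by linarith)
      have hfib2 : prodUpTo d (n+2) (Function.update W' (n+1) Wl) = prodUpTo d (n+2) Wh := by
        show Function.update W' (n+1) Wl (n+1) * prodUpTo d (n+1) (Function.update W' (n+1) Wl)
            = Wh (n+1) * prodUpTo d (n+1) Wh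
        rw [Function.update_self, prodUpTo_update_of_le W' (n+1) Wl (n+1) le_rfl, hfib', hfib]
      have hcond := C (Function.update W' (n+1) Wl) hb2 hfib2 ℓ (by omega) V
      rw [hWtl] at hcond
      have e1 : prodUpTo d (n+2)
            (Function.update (Function.update W' (n+1) Wl) ℓ (W' ℓ + V))
          = Wl * prodUpTo d (n+1) (Function.update W' ℓ (W' ℓ + V)) := by
        rw [Function.update_comm (show (n+1 : ℕ) ≠ ℓ by omega) Wl (W' ℓ + V) W']
        show Function.update (Function.update W' ℓ (W' ℓ + V)) (n+1) Wl (n+1) *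
            prodUpTo d (n+1) (Function.update (Function.update W' ℓ (W' ℓ + V)) (n+1) Wl) = _
        rw [Function.update_self, prodUpTo_update_of_le _ (n+1) Wl (n+1) le_rfl]
      have e2 : prodUpTo d (n+2) Wh = Wh (n+1) * prodUpTo d (n+1) Wh := rfl
      rw [e1, e2, ← hfib, ← Matrix.mul_sub, ← Matrix.mul_assoc] at hcond
      rw [Matrix.transpose_mul, Matrix.transpose_transpose]
      exact hcond
    by_cases hex : ∃ u : Fin (d (n+1)) → ℝ, u ≠ 0 ∧ u ᵥ* (prodUpTo d (n+1) Wh) = 0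
    · obtain ⟨u, hu, hPu⟩ := hex
      apply eq_zero_of_vecMul
      intro v
      have hMP : vecMulVec v u * prodUpTo d (n+1) Wh = 0 := by
        rw [vecMulVec_mul, hPu, vecMulVec_zero_right]
      set M := vecMulVec v u with hM
      set c := (η/2) / (frob M + 1) with hc
      have hfM := frob_nonneg M
      have hc0 : 0 < c := div_pos hη2 (by linarith)
      have h1 : (Wh (n+1))ᵀ * A = 0 := key (Wh (n+1)) (by rw [sub_self, frob_zero]; linarith) rfl
      have h2 : (Wh (n+1) + c • M)ᵀ * A = 0 := by
        apply key
        · rw [add_sub_cancel_left, frob_smul, abs_of_pos hc0]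
          calc c * frob M ≤ c * (frob M + 1) := by nlinarith
          _ = η/2 := by rw [hc]; field_simp
        · rw [Matrix.add_mul, Matrix.smul_mul, hMP, smul_zero, add_zero]
      rw [Matrix.transpose_add, Matrix.add_mul, h1] at h2
      have h2' : c • (Mᵀ * A) = 0 := by
        have := h2
        rw [Matrix.transpose_smul, Matrix.smul_mul] at this
        simpa using this
      have h3 : Mᵀ * A = 0 := by
        rcases smul_eq_zero.mp h2' with h | h
        · exact absurd h (ne_of_gt hc0)
        · exact h
      rw [hM, vecMulVec_transpose, vecMulVec_mul] at h3
      obtain ⟨j0, hj0⟩ := Function.ne_iff.mp hu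
      funext k
      have h5 := congrFun (congrFun h3 j0) k
      have h4 : u j0 * (v ᵥ* A) k = 0 := by
        simpa [Matrix.vecMulVec_apply] using h5
      rcases mul_eq_zero.mp h4 with h | h
      · exact absurd h hj0
      · simpa using h
    · have hinj : ∀ u : Fin (d (n+1)) → ℝ, u ᵥ* (prodUpTo d (n+1) Wh) = 0 → u = 0 := by
        intro u hu
        by_contra h
        exact hex ⟨u, h, hu⟩
      have hb0 : ∀ j, j < n+2 → frob (Wh j - Wh j) ≤ η := fun j _ => by
        rw [sub_self, frob_zero]; linarith
      have hAP : A * (prodUpTo d (n+1) Wh)ᵀ = 0 := by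
        apply eq_zero_of_trace
        intro V
        have hcond := C Wh hb0 rfl (n+1) (by omega) V
        have e1 : prodUpTo d (n+2) (Function.update Wh (n+1) (Wh (n+1) + V))
            = (Wh (n+1) + V) * prodUpTo d (n+1) Wh := by
          show Function.update Wh (n+1) (Wh (n+1) + V) (n+1) *
              prodUpTo d (n+1) (Function.update Wh (n+1) (Wh (n+1) + V)) = _
          rw [Function.update_self, prodUpTo_update_of_le Wh (n+1) _ (n+1) le_rfl]
        have e2 : prodUpTo d (n+2) Wh = Wh (n+1) * prodUpTo d (n+1) Wh := rfl
        rw [e1, e2, Matrix.add_mul, add_sub_cancel_left] at hcond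
        rw [Matrix.transpose_mul, Matrix.transpose_transpose, ← Matrix.trace_mul_cycle,
          Matrix.mul_assoc]
        exact hcond
      have hrow : ∀ i, (fun j => A i j) = 0 := by
        intro i
        refine inj_surj (prodUpTo d (n+1) Wh)ᵀ (hd (n+1) (by omega)) ?_ _ ?_
        · intro u hu
          apply hinj
          rw [← Matrix.mulVec_transpose]
          exact hu
        · rw [Matrix.transpose_transpose]
          funext k'
          have := congrFun (congrFun hAP i) k'
          simpa [Matrix.mulVec, dotProduct, Matrix.mul_apply,
            Matrix.transpose_apply, mul_comm] using this
      ext i k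
      have := congrFun (hrow i) k
      simpa using this

/-- Fiber first-order-condition lemma, version for `d (n+1) ≤ d j` (tail peeling). -/
theorem lemLA : ∀ (n : ℕ) (d : ℕ → ℕ), (∀ j, j ≤ n+1 → d (n+1) ≤ d j) →
    ∀ (A : Matrix (Fin (d (n+1))) (Fin (d 0)) ℝ)
      (Wh : (j : ℕ) → Matrix (Fin (d (j+1))) (Fin (d j)) ℝ) (η : ℝ), 0 < η →
    (∀ W : (j : ℕ) → Matrix (Fin (d (j+1))) (Fin (d j)) ℝ,
      (∀ j, j < n+1 → frob (W j - Wh j) ≤ η) →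
      prodUpTo d (n+1) W = prodUpTo d (n+1) Wh →
      ∀ ℓ, ℓ < n+1 → ∀ V : Matrix (Fin (d (ℓ+1))) (Fin (d ℓ)) ℝ,
        (Aᵀ * (prodUpTo d (n+1) (Function.update W ℓ (W ℓ + V))
          - prodUpTo d (n+1) Wh)).trace = 0) →
    A = 0 := by
  intro n
  induction n with
  | zero =>
    intro d hd A Wh η hη C
    have hb0 : ∀ j, j < 0+1 → frob (Wh j - Wh j) ≤ η := fun j _ => by
      rw [sub_self, frob_zero]; linarith
    apply eq_zero_of_trace
    intro V
    have h2 := C Wh hb0 rfl 0 (by omega) V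
    have eA : prodUpTo d (0+1) (Function.update Wh 0 (Wh 0 + V))
        = (Wh 0 + V) * prodUpTo d 0 Wh := by
      show (Function.update Wh 0 (Wh 0 + V)) 0
          * prodUpTo d 0 (Function.update Wh 0 (Wh 0 + V)) = _
      rw [Function.update_self]
      rfl
    have eB : prodUpTo d (0+1) Wh = Wh 0 * prodUpTo d 0 Wh := rfl
    rw [eA, eB, Matrix.add_mul, add_sub_cancel_left] at h2
    rw [show prodUpTo d 0 Wh = (1 : Matrix (Fin (d 0)) (Fin (d 0)) ℝ) from rfl,
      Matrix.mul_one] at h2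
    exact h2
  | succ n IH =>
    intro d hd A Wh η hη C
    have hη2 : 0 < η/2 := by linarith
    have key : ∀ W₀ : Matrix (Fin (d 1)) (Fin (d 0)) ℝ,
        frob (W₀ - Wh 0) ≤ η/2 →
        prodUpTo (fun j => d (j+1)) (n+1) (fun j => Wh (j+1)) * W₀
          = prodUpTo (fun j => d (j+1)) (n+1) (fun j => Wh (j+1)) * Wh 0 →
        A * W₀ᵀ = 0 := by
      intro W₀ hb hfib
      apply IH (fun j => d (j+1)) (fun j hj => hd (j+1) (by omega)) (A * W₀ᵀ)
        (fun j => Wh (j+1)) (η/2) hη2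
      intro W' hb' hfib' ℓ hℓ V
      have hb2 : ∀ j, j < n+2 → frob (consTup d W₀ W' j - Wh j) ≤ η := by
        intro j hj
        match j with
        | 0 => exact le_trans hb (by linarith)
        | j+1 => exact le_trans (hb' j (by omega)) (by linarith)
      have hfib2 : prodUpTo d (n+2) (consTup d W₀ W') = prodUpTo d (n+2) Wh := by
        rw [prodUpTo_peel (consTup d W₀ W') (n+1), prodUpTo_peel Wh (n+1)]
        show prodUpTo (fun j => d (j+1)) (n+1) W' * W₀ = _
        rw [hfib', hfib]
      have hcond := C (consTup d W₀ W') hb2 hfib2 (ℓ+1) (by omega) V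
      have e1 : prodUpTo d (n+2)
            (Function.update (consTup d W₀ W') (ℓ+1) (consTup d W₀ W' (ℓ+1) + V))
          = prodUpTo (fun j => d (j+1)) (n+1) (Function.update W' ℓ (W' ℓ + V)) * W₀ := by
        rw [prodUpTo_peel _ (n+1)]
        have g1 : (fun j => Function.update (consTup d W₀ W') (ℓ+1)
              (consTup d W₀ W' (ℓ+1) + V) (j+1)) = Function.update W' ℓ (W' ℓ + V) := by
          rw [shift_update (consTup d W₀ W') ℓ (consTup d W₀ W' (ℓ+1) + V)]
          rfl
        have g2 : Function.update (consTup d W₀ W') (ℓ+1) (consTup d W₀ W' (ℓ+1) + V) 0 = W₀ :=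
          Function.update_of_ne (by omega) _ _
        rw [g1, g2]
      have e2 : prodUpTo d (n+2) Wh
          = prodUpTo (fun j => d (j+1)) (n+1) (fun j => Wh (j+1)) * Wh 0 :=
        prodUpTo_peel Wh (n+1)
      rw [e1, e2, ← hfib, ← Matrix.sub_mul, ← Matrix.mul_assoc,
        Matrix.trace_mul_comm] at hcond
      rw [Matrix.transpose_mul, Matrix.transpose_transpose, Matrix.mul_assoc]
      exact hcond
    by_cases hex : ∃ u : Fin (d 1) → ℝ, u ≠ 0 ∧
        (prodUpTo (fun j => d (j+1)) (n+1) (fun j => Wh (j+1))) *ᵥ u = 0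
    · obtain ⟨u, hu, hTu⟩ := hex
      apply eq_zero_of_mulVec
      intro v
      have hTM : prodUpTo (fun j => d (j+1)) (n+1) (fun j => Wh (j+1)) * vecMulVec u v = 0 := by
        rw [mul_vecMulVec, hTu]
        ext i j; simp [Matrix.vecMulVec_apply]
      set M := vecMulVec u v with hM
      set c := (η/2) / (frob M + 1) with hc
      have hfM := frob_nonneg M
      have hc0 : 0 < c := div_pos hη2 (by linarith)
      have h1 : A * (Wh 0)ᵀ = 0 := key (Wh 0) (by rw [sub_self, frob_zero]; linarith) rfl
      have h2 : A * (Wh 0 + c • M)ᵀ = 0 := by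
        apply key
        · rw [add_sub_cancel_left, frob_smul, abs_of_pos hc0]
          calc c * frob M ≤ c * (frob M + 1) := by nlinarith
          _ = η/2 := by rw [hc]; field_simp
        · rw [Matrix.mul_add, Matrix.mul_smul, hTM, smul_zero, add_zero]
      rw [Matrix.transpose_add, Matrix.mul_add, h1] at h2
      have h2' : c • (A * Mᵀ) = 0 := by
        have := h2
        rw [Matrix.transpose_smul, Matrix.mul_smul] at this
        simpa using this
      have h3 : A * Mᵀ = 0 := by
        rcases smul_eq_zero.mp h2' with h | h
        · exact absurd h (ne_of_gt hc0)
        · exact h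
      rw [hM, vecMulVec_transpose, mul_vecMulVec] at h3
      obtain ⟨j0, hj0⟩ := Function.ne_iff.mp hu
      funext i
      have h5 := congrFun (congrFun h3 i) j0
      have h4 : (A *ᵥ v) i * u j0 = 0 := by
        simpa [Matrix.vecMulVec_apply] using h5
      rcases mul_eq_zero.mp h4 with h | h
      · simpa using h
      · exact absurd h hj0
    · have hinj : ∀ u : Fin (d 1) → ℝ,
          (prodUpTo (fun j => d (j+1)) (n+1) (fun j => Wh (j+1))) *ᵥ u = 0 → u = 0 := by
        intro u hu
        by_contra h
        exact hex ⟨u, h, hu⟩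
      have hb0 : ∀ j, j < n+2 → frob (Wh j - Wh j) ≤ η := fun j _ => by
        rw [sub_self, frob_zero]; linarith
      have hTA : (prodUpTo (fun j => d (j+1)) (n+1) (fun j => Wh (j+1)))ᵀ * A = 0 := by
        apply eq_zero_of_trace
        intro V
        have hcond := C Wh hb0 rfl 0 (by omega) V
        have e1 : prodUpTo d (n+2) (Function.update Wh 0 (Wh 0 + V))
            = prodUpTo (fun j => d (j+1)) (n+1) (fun j => Wh (j+1)) * (Wh 0 + V) := by
          rw [prodUpTo_peel _ (n+1)]
          have g1 : (fun j => Function.update Wh 0 (Wh 0 + V) (j+1)) = (fun j => Wh (j+1)) :=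
            shift_update_zero Wh _
          have g2 : Function.update Wh 0 (Wh 0 + V) 0 = Wh 0 + V := Function.update_self _ _ _
          rw [g1, g2]
        have e2 : prodUpTo d (n+2) Wh
            = prodUpTo (fun j => d (j+1)) (n+1) (fun j => Wh (j+1)) * Wh 0 :=
          prodUpTo_peel Wh (n+1)
        rw [e1, e2, Matrix.mul_add, add_sub_cancel_left] at hcond
        rw [Matrix.transpose_mul, Matrix.transpose_transpose, Matrix.mul_assoc]
        exact hcond
      have hcol : ∀ k, (fun i => A i k) = 0 := by
        intro k
        refine inj_surj (prodUpTo (fun j => d (j+1)) (n+1) (fun j => Wh (j+1)))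
          (hd 1 (by omega)) hinj _ ?_
        funext k'
        have := congrFun (congrFun hTA k') k
        simpa [Matrix.mulVec, dotProduct, Matrix.mul_apply,
          Matrix.transpose_apply, mul_comm] using this
      ext i k
      have := congrFun (hcol k) i
      simpa using this

end Stmt6Aux

open Stmt6Aux in
/-- Theorem 3: if `f` is differentiable and `min{d_1,...,d_{L-1}} ≥ min{d_0, d_L}`, then
at any local minimizer `(Ŵ_1,...,Ŵ_L)` of `F(W_1,...,W_L) = f(W_L ... W_1)` the
optimality condition `∇f(Ŵ_L ... Ŵ_1) = 0` holds. -/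
theorem stmt6 (L : ℕ) (hL : 1 ≤ L) (d : ℕ → ℕ)
    (hstruct : ∀ ℓ, 1 ≤ ℓ → ℓ < L → min (d 0) (d L) ≤ d ℓ)
    (f : Matrix (Fin (d L)) (Fin (d 0)) ℝ → ℝ)
    (G : Matrix (Fin (d L)) (Fin (d 0)) ℝ → Matrix (Fin (d L)) (Fin (d 0)) ℝ)
    (hf : ∀ A, HasGradAt f A (G A))
    (What : (j : ℕ) → Matrix (Fin (d (j+1))) (Fin (d j)) ℝ)
    (hmin : ∃ ε > (0:ℝ), ∀ W, (∀ j < L, frob (W j - What j) ≤ ε) →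
      f (prodUpTo d L W) ≥ f (prodUpTo d L What)) :
    G (prodUpTo d L What) = 0 := by
  
  classical
  obtain ⟨ε, hε, hs⟩ := hmin
  have C : ∀ W : (j : ℕ) → Matrix (Fin (d (j+1))) (Fin (d j)) ℝ,
      (∀ j, j < L → frob (W j - What j) ≤ ε/2) →
      prodUpTo d L W = prodUpTo d L What →
      ∀ ℓ, ℓ < L → ∀ V : Matrix (Fin (d (ℓ+1))) (Fin (d ℓ)) ℝ,
        ((G (prodUpTo d L What))ᵀ * (prodUpTo d L (Function.update W ℓ (W ℓ + V))
          - prodUpTo d L What)).trace = 0 := by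
    intro W hb hfib ℓ hℓ V
    obtain ⟨m, rfl⟩ : ∃ m, L = ℓ+1+m := ⟨L - (ℓ+1), by omega⟩
    set Ah := prodUpTo d (ℓ+1+m) What with hAh
    set G₀ := G Ah with hG0
    set T := prodFrom d (ℓ+1) m W with hT
    set P := prodUpTo d ℓ W with hP
    have hupd : ∀ X : Matrix (Fin (d (ℓ+1))) (Fin (d ℓ)) ℝ,
        prodUpTo d (ℓ+1+m) (Function.update W ℓ X) = T * (X * P) := fun X =>
      prodUpTo_update W ℓ m X
    have hWfull : prodUpTo d (ℓ+1+m) W = T * (W ℓ * P) := by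
      conv_lhs => rw [← Function.update_eq_self ℓ W]
      exact hupd (W ℓ)
    have hline : ∀ t : ℝ,
        prodUpTo d (ℓ+1+m) (Function.update W ℓ (W ℓ + t • V)) = Ah + t • (T * (V * P)) := by
      intro t
      rw [hupd, Matrix.add_mul, Matrix.mul_add, ← hWfull, hfib, Matrix.smul_mul,
        Matrix.mul_smul]
    have hgoal1 : prodUpTo d (ℓ+1+m) (Function.update W ℓ (W ℓ + V)) - Ah = T * (V * P) := by
      have h1 := hline 1
      simp only [one_smul] at h1
      rw [h1, add_sub_cancel_left]
    rw [hgoal1]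
    set c0 := (G₀ᵀ * (T * (V * P))).trace with hc0def
    have hDnn := frob_nonneg (T * (V * P))
    have hfV := frob_nonneg V
    have habs : ∀ ε' : ℝ, 0 < ε' → |c0| ≤ ε' * frob (T * (V * P)) := by
      intro ε' hε'
      obtain ⟨δ, hδ, hgr⟩ := hf Ah ε' hε'
      set t := min (ε/2 / (frob V + 1)) (δ / (frob (T * (V * P)) + 1)) with ht
      have hneV : frob V + 1 ≠ 0 := by linarith
      have hneD : frob (T * (V * P)) + 1 ≠ 0 := by linarith
      have ht0 : 0 < t := lt_min (div_pos (by linarith) (by linarith))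
        (div_pos hδ (by linarith))
      have ht1 : t ≤ ε/2 / (frob V + 1) := min_le_left _ _
      have ht2 : t ≤ δ / (frob (T * (V * P)) + 1) := min_le_right _ _
      have htfV : t * frob V ≤ ε/2 := by
        calc t * frob V ≤ (ε/2 / (frob V + 1)) * (frob V + 1) :=
              mul_le_mul ht1 (by linarith) hfV (le_of_lt (div_pos (by linarith) (by linarith)))
        _ = ε/2 := div_mul_cancel₀ _ hneV
      have htfD : t * frob (T * (V * P)) ≤ δ := by
        calc t * frob (T * (V * P))
            ≤ (δ / (frob (T * (V * P)) + 1)) * (frob (T * (V * P)) + 1) :=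
              mul_le_mul ht2 (by linarith) hDnn (le_of_lt (div_pos hδ (by linarith)))
        _ = δ := div_mul_cancel₀ _ hneD
      have hminpt : ∀ s : ℝ, |s| ≤ t → f (Ah + s • (T * (V * P))) ≥ f Ah := by
        intro s hsle
        have hbs : ∀ j, j < ℓ+1+m →
            frob (Function.update W ℓ (W ℓ + s • V) j - What j) ≤ ε := by
          intro j hj
          rcases eq_or_ne j ℓ with rfl | hne
          · rw [Function.update_self, add_sub_right_comm]
            refine le_trans (frob_add_le _ _) ?_
            rw [frob_smul]
            have h5 : |s| * frob V ≤ t * frob V :=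
              mul_le_mul_of_nonneg_right hsle hfV
            have h6 := hb j hj
            linarith
          · rw [Function.update_of_ne hne]
            exact le_trans (hb j hj) (by linarith)
        have hres := hs (Function.update W ℓ (W ℓ + s • V)) hbs
        rw [hline s] at hres
        exact hres
      have e1 := hgr (t • (T * (V * P))) (by rw [frob_smul, abs_of_pos ht0]; exact htfD)
      have e2 := hgr ((-t) • (T * (V * P)))
        (by rw [frob_smul, abs_neg, abs_of_pos ht0]; exact htfD)
      have k1 := hminpt t (by rw [abs_of_pos ht0])
      have k2 := hminpt (-t) (by rw [abs_neg, abs_of_pos ht0])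
      have etr : ∀ s : ℝ, (G₀ᵀ * (s • (T * (V * P)))).trace = s * c0 := by
        intro s
        rw [Matrix.mul_smul, Matrix.trace_smul, hc0def, smul_eq_mul]
      rw [etr, frob_smul, abs_of_pos ht0] at e1
      rw [etr, frob_smul, abs_neg, abs_of_pos ht0] at e2
      obtain ⟨l1, r1⟩ := abs_le.mp e1
      obtain ⟨l2, r2⟩ := abs_le.mp e2
      have hringA : t * (-(ε' * frob (T * (V * P)))) = -(ε' * (t * frob (T * (V * P)))) := by
        ring
      have hringB : t * (ε' * frob (T * (V * P))) = ε' * (t * frob (T * (V * P))) := by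
        ring
      have hringC : (-t) * c0 = -(t * c0) := by ring
      rw [abs_le]
      constructor
      · have hmul : t * (-(ε' * frob (T * (V * P)))) ≤ t * c0 := by linarith
        exact (mul_le_mul_iff_right₀ ht0).mp hmul
      · have hmul : t * c0 ≤ t * (ε' * frob (T * (V * P))) := by linarith
        exact (mul_le_mul_iff_right₀ ht0).mp hmul
    rcases eq_or_lt_of_le hDnn with h0 | hpos
    · have h1 := habs 1 one_pos
      rw [← h0, mul_zero] at h1
      exact abs_nonpos_iff.mp h1
    · by_contra hne
      have hcpos : 0 < |c0| := abs_pos.mpr hne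
      have h1 := habs ((|c0|/2) / frob (T * (V * P)))
        (div_pos (by linarith) hpos)
      rw [div_mul_cancel₀ _ (ne_of_gt hpos)] at h1
      linarith
  rcases le_total (d 0) (d L) with hcase | hcase
  · obtain ⟨n, rfl⟩ : ∃ n, L = n+1 := ⟨L-1, by omega⟩
    refine lemLA' n d ?_ (G (prodUpTo d (n+1) What)) What (ε/2) (by linarith) C
    intro j hj
    rcases Nat.eq_zero_or_pos j with rfl | hj1
    · exact le_rfl
    · rcases eq_or_lt_of_le hj with rfl | hjlt
      · exact hcase
      · exact le_trans (le_min le_rfl hcase) (hstruct j hj1 hjlt)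
  · obtain ⟨n, rfl⟩ : ∃ n, L = n+1 := ⟨L-1, by omega⟩
    refine lemLA n d ?_ (G (prodUpTo d (n+1) What)) What (ε/2) (by linarith) C
    intro j hj
    rcases eq_or_lt_of_le hj with rfl | hjlt
    · exact le_rfl
    · rcases Nat.eq_zero_or_pos j with rfl | hj1
      · exact hcase
      · exact le_trans (le_min hcase le_rfl) (hstruct j hj1 hjlt)
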